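/- The standard Gaussian measure N(0,1) restricted (and renormalized) to a symmetric interval [−b, b] has Poincaré constant at most 4b²/π², i.e., at most the Poincaré constant of the uniform measure on [−b, b]. -/

import Mathlib

/-!
Bound the variance by `∫ (f - f 0)²` and treat `[0, b]` and `[-b, 0]` separately: on each half
`g = f - f 0` vanishes at `0`, and one needs a weighted Wirtinger inequality for the weight
`ρ = exp (-V)`, where `V' ≥ 0` on `[0, b]`. On `[0, c]`, `c < b`, put `ω = π / (2b)` and
`k x = ω cot (ω (x + b - c))`, so that `k ≥ 0`, `k' = -(ω² + k²)` and `k c = 0`. The pointwise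
identity
  `(g'² - ω² g²) ρ = ((g' - k g)² + V' k g²) ρ + (g² k ρ)'`
integrates, with vanishing boundary term, to `ω² ∫₀ᶜ g² ρ ≤ ∫₀ᶜ g'² ρ`; then let `c → b`.
A weight that decreases away from `0` thus does not spoil the constant `(2b / π)²` of the
uniform measure, and normalizing the measure does not affect a Poincaré inequality.
-/

open MeasureTheory Real Set

/-- Variance of `f` under `μ`, as `inf_a ∫ (f-a)^2 dμ`. -/
noncomputable def Var (μ : Measure ℝ) (f : ℝ → ℝ) : ℝ := ⨅ a : ℝ, ∫ x, (f x - a)^2 ∂μ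

/-- `μ` satisfies a Poincaré inequality with constant `C`, over test functions that are
differentiable on the supporting interval `s` with `f, f' ∈ L²(μ)`. -/
def PoincareOn (μ : Measure ℝ) (s : Set ℝ) (C : ℝ) : Prop :=
  ∀ f f' : ℝ → ℝ, (∀ x ∈ s, HasDerivAt f (f' x) x) →
    Integrable (fun x => (f x)^2) μ → Integrable (fun x => (f' x)^2) μ →
    Var μ f ≤ C * ∫ x, (f' x)^2 ∂μ

/-- The optimal Poincaré constant of `μ` on the interval `s`. -/
noncomputable def CP (μ : Measure ℝ) (s : Set ℝ) : ℝ := sInf {C | 0 ≤ C ∧ PoincareOn μ s C}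

open Filter Topology intervalIntegral
open scoped Interval

theorem Real.hasDerivAt_cot {x : ℝ} (hx : sin x ≠ 0) :
    HasDerivAt Real.cot (-(1 + Real.cot x ^ 2)) x := by
  have hcot : Real.cot = fun y => cos y / sin y := funext Real.cot_eq_cos_div_sin
  rw [hcot]
  refine ((hasDerivAt_cos x).div (hasDerivAt_sin x) hx).congr_deriv ?_
  field_simp
  nlinarith [sin_sq_add_cos_sq x]

theorem IntervalIntegrable.mul_mul_of_sq_mul {u v w : ℝ → ℝ} {a b : ℝ}
    (hu : AEStronglyMeasurable u (volume.restrict (Ι a b)))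
    (hv : AEStronglyMeasurable v (volume.restrict (Ι a b)))
    (hw : AEStronglyMeasurable w (volume.restrict (Ι a b))) (hw0 : 0 ≤ w)
    (hu2 : IntervalIntegrable (fun x => u x ^ 2 * w x) volume a b)
    (hv2 : IntervalIntegrable (fun x => v x ^ 2 * w x) volume a b) :
    IntervalIntegrable (fun x => u x * v x * w x) volume a b := by
  refine (hu2.add hv2).mono_fun' ((hu.mul hv).mul hw) ?_
  refine Eventually.of_forall fun x => ?_
  have hwx := hw0 x
  simp only [Real.norm_eq_abs, abs_le]
  constructor <;> nlinarith [mul_nonneg (sq_nonneg (u x - v x)) hwx,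
    mul_nonneg (sq_nonneg (u x + v x)) hwx]

theorem IntervalIntegrable.mul_deriv_mul_of_sq_mul {g g' w : ℝ → ℝ} {a b : ℝ} (hab : a ≤ b)
    (hg : ∀ x ∈ Icc a b, HasDerivAt g (g' x) x) (hw : Continuous w) (hw0 : 0 ≤ w)
    (hgi : IntervalIntegrable (fun x => g x ^ 2 * w x) volume a b)
    (hg'i : IntervalIntegrable (fun x => g' x ^ 2 * w x) volume a b) :
    IntervalIntegrable (fun x => g x * g' x * w x) volume a b := by
  have hg_meas : AEStronglyMeasurable g (volume.restrict (Ι a b)) := by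
    rw [uIoc_of_le hab]
    exact (continuousOn_of_forall_continuousAt fun x hx => (hg x hx).continuousAt).mono
      Ioc_subset_Icc_self |>.aestronglyMeasurable measurableSet_Ioc
  have hg'_meas : AEStronglyMeasurable g' (volume.restrict (Ι a b)) := by
    rw [uIoc_of_le hab]
    refine (measurable_deriv g).aestronglyMeasurable.congr ?_
    exact (ae_restrict_iff' measurableSet_Ioc).2 <| Eventually.of_forall fun x hx =>
      (hg x (Ioc_subset_Icc_self hx)).deriv
  exact hgi.mul_mul_of_sq_mul hg_meas hg'_meas hw.aestronglyMeasurable hw0 hg'i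

-- the logarithmic derivative of `u x = sin (π / (2 * b) * (x + (b - c)))`, which solves
-- `u'' = -(π / (2 * b))² u` with `u' c = 0`
noncomputable def cotMultiplier (b c x : ℝ) : ℝ :=
  π / (2 * b) * Real.cot (π / (2 * b) * (x + (b - c)))

theorem cotMultiplier_self {b : ℝ} (hb : b ≠ 0) (c : ℝ) : cotMultiplier b c c = 0 := by
  have : π / (2 * b) * (c + (b - c)) = π / 2 := by field_simp; ring
  rw [cotMultiplier, this, Real.cot_eq_cos_div_sin, cos_pi_div_two, zero_div, mul_zero]

section CotMultiplier

variable {b c : ℝ} (hc0 : 0 < c) (hcb : c < b)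
include hc0 hcb

theorem cotMultiplier_arg_mem_Ioc {x : ℝ} (hx : x ∈ Icc 0 c) :
    π / (2 * b) * (x + (b - c)) ∈ Ioc 0 (π / 2) := by
  have hb : 0 < b := hc0.trans hcb
  have hω : 0 < π / (2 * b) := by positivity
  refine ⟨by nlinarith [hx.1], ?_⟩
  calc π / (2 * b) * (x + (b - c)) ≤ π / (2 * b) * b := by nlinarith [hx.2]
    _ = π / 2 := by field_simp

theorem sin_cotMultiplier_arg_pos {x : ℝ} (hx : x ∈ Icc 0 c) :
    0 < sin (π / (2 * b) * (x + (b - c))) :=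
  have h := cotMultiplier_arg_mem_Ioc hc0 hcb hx
  sin_pos_of_pos_of_lt_pi h.1 (by linarith [h.2, pi_pos])

theorem cotMultiplier_nonneg {x : ℝ} (hx : x ∈ Icc 0 c) : 0 ≤ cotMultiplier b c x := by
  have h := cotMultiplier_arg_mem_Ioc hc0 hcb hx
  have := cos_nonneg_of_mem_Icc ⟨by linarith [h.1, pi_pos], h.2⟩
  have := sin_cotMultiplier_arg_pos hc0 hcb hx
  have := hc0.trans hcb
  rw [cotMultiplier, Real.cot_eq_cos_div_sin]
  positivity

theorem hasDerivAt_cotMultiplier {x : ℝ} (hx : x ∈ Icc 0 c) :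
    HasDerivAt (cotMultiplier b c) (-((π / (2 * b)) ^ 2 + cotMultiplier b c x ^ 2)) x := by
  have haff : HasDerivAt (fun y => π / (2 * b) * (y + (b - c))) (π / (2 * b)) x := by
    simpa using ((hasDerivAt_id x).add_const (b - c)).const_mul (π / (2 * b))
  refine (((Real.hasDerivAt_cot (sin_cotMultiplier_arg_pos hc0 hcb hx).ne').comp x
    haff).const_mul _).congr_deriv ?_
  rw [cotMultiplier]
  ring

end CotMultiplier

section Wirtinger

variable {V V' : ℝ → ℝ} (hV : ∀ x, HasDerivAt V (V' x) x) (hV' : Continuous V')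
include hV hV'

theorem weighted_wirtinger_of_lt {b c : ℝ} (hc0 : 0 < c) (hcb : c < b)
    (hV'_nonneg : ∀ x ∈ Icc 0 c, 0 ≤ V' x) {g g' : ℝ → ℝ}
    (hg : ∀ x ∈ Icc 0 c, HasDerivAt g (g' x) x) (hg0 : g 0 = 0)
    (hgi : IntervalIntegrable (fun x => g x ^ 2 * exp (-V x)) volume 0 c)
    (hg'i : IntervalIntegrable (fun x => g' x ^ 2 * exp (-V x)) volume 0 c) :
    (π / (2 * b)) ^ 2 * ∫ x in 0..c, g x ^ 2 * exp (-V x)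
      ≤ ∫ x in 0..c, g' x ^ 2 * exp (-V x) := by
  set ρ : ℝ → ℝ := fun x => exp (-V x)
  set k := cotMultiplier b c
  have huIcc : uIcc 0 c = Icc 0 c := uIcc_of_le hc0.le
  have hρ : ∀ x, HasDerivAt ρ (-V' x * ρ x) x := fun x => by
    refine ((hV x).neg.exp).congr_deriv ?_
    simp only [ρ, Pi.neg_apply]
    ring
  have hρ_cont : Continuous ρ := continuous_iff_continuousAt.2 fun x => (hρ x).continuousAt
  have hk_cont : ContinuousOn k (uIcc 0 c) :=
    continuousOn_of_forall_continuousAt fun x hx =>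
      (hasDerivAt_cotMultiplier hc0 hcb (huIcc ▸ hx)).continuousAt
  have hgg' : IntervalIntegrable (fun x => g x * g' x * ρ x) volume 0 c :=
    hgi.mul_deriv_mul_of_sq_mul hc0.le hg hρ_cont (fun x => (exp_pos _).le) hg'i
  set B' : ℝ → ℝ := fun x =>
    2 * (g x * g' x * ρ x * k x) - g x ^ 2 * ρ x * ((π / (2 * b)) ^ 2 + k x ^ 2 + V' x * k x)
  have hB : ∀ x ∈ uIcc 0 c, HasDerivAt (fun x => g x ^ 2 * (k x * ρ x)) (B' x) x := by
    intro x hx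
    rw [huIcc] at hx
    refine (((hg x hx).pow 2).mul
      ((hasDerivAt_cotMultiplier hc0 hcb hx).mul (hρ x))).congr_deriv ?_
    simp only [B', Pi.pow_apply, Pi.mul_apply]
    ring
  have hB'_int : IntervalIntegrable B' volume 0 c := by
    refine ((hgg'.mul_continuousOn hk_cont).const_mul 2).sub (hgi.mul_continuousOn
      (g := fun x => (π / (2 * b)) ^ 2 + k x ^ 2 + V' x * k x) ?_)
    exact (continuousOn_const.add (hk_cont.pow 2)).add (hV'.continuousOn.mul hk_cont)
  have hB'_integral : ∫ x in 0..c, B' x = 0 := by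
    rw [integral_eq_sub_of_hasDerivAt hB hB'_int]
    simp [hg0, k, cotMultiplier_self (hc0.trans hcb).ne']
  have hsq : ∀ x, g' x ^ 2 * exp (-V x) - (π / (2 * b)) ^ 2 * (g x ^ 2 * exp (-V x)) - B' x
      = ((g' x - k x * g x) ^ 2 + V' x * k x * g x ^ 2) * ρ x := fun x => by
    simp only [B', ρ]
    ring
  have hnonneg : 0 ≤ ∫ x in 0..c, ((g' x - k x * g x) ^ 2 + V' x * k x * g x ^ 2) * ρ x := by
    refine integral_nonneg hc0.le fun x hx => ?_
    have := hV'_nonneg x hx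
    have := cotMultiplier_nonneg hc0 hcb hx
    have := exp_pos (-V x)
    positivity
  rw [← integral_congr fun x _ => hsq x, integral_sub (hg'i.sub (hgi.const_mul _)) hB'_int,
    integral_sub hg'i (hgi.const_mul _), intervalIntegral.integral_const_mul,
    hB'_integral] at hnonneg
  linarith

theorem weighted_wirtinger {b : ℝ} (hb : 0 < b) (hV'_nonneg : ∀ x ∈ Ico 0 b, 0 ≤ V' x)
    {g g' : ℝ → ℝ} (hg : ∀ x ∈ Ico 0 b, HasDerivAt g (g' x) x) (hg0 : g 0 = 0)
    (hgi : IntervalIntegrable (fun x => g x ^ 2 * exp (-V x)) volume 0 b)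
    (hg'i : IntervalIntegrable (fun x => g' x ^ 2 * exp (-V x)) volume 0 b) :
    (π / (2 * b)) ^ 2 * ∫ x in 0..b, g x ^ 2 * exp (-V x)
      ≤ ∫ x in 0..b, g' x ^ 2 * exp (-V x) := by
  set F : ℝ → ℝ := fun c => ∫ x in 0..c, g x ^ 2 * exp (-V x)
  have hF : ContinuousOn F (Icc 0 b) := by
    simpa only [uIcc_of_le hb.le] using continuousOn_primitive_interval' hgi left_mem_uIcc
  have hbound :
      ∀ c ∈ Ioo 0 b, (π / (2 * b)) ^ 2 * F c ≤ ∫ x in 0..b, g' x ^ 2 * exp (-V x) := by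
    intro c hc
    have hsub : uIcc 0 c ⊆ uIcc 0 b :=
      uIcc_subset_uIcc_left (mem_uIcc_of_le hc.1.le hc.2.le)
    refine (weighted_wirtinger_of_lt hV hV' hc.1 hc.2
      (fun x hx => hV'_nonneg x ⟨hx.1, hx.2.trans_lt hc.2⟩)
      (fun x hx => hg x ⟨hx.1, hx.2.trans_lt hc.2⟩) hg0 (hgi.mono_set hsub)
      (hg'i.mono_set hsub)).trans ?_
    refine integral_mono_interval le_rfl hc.1.le hc.2.le
      (Eventually.of_forall fun x => by positivity) hg'i
  have hlim : Tendsto (fun c => (π / (2 * b)) ^ 2 * F c) (𝓝[Ioo 0 b] b)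
      (𝓝 ((π / (2 * b)) ^ 2 * F b)) :=
    ((hF b (right_mem_Icc.2 hb.le)).mono Ioo_subset_Icc_self).tendsto.const_mul _
  have := right_nhdsWithin_Ioo_neBot hb
  exact le_of_tendsto hlim (eventually_mem_nhdsWithin.mono hbound)

theorem integral_sq_sub_apply_zero_le {b : ℝ} (hb : 0 < b)
    (hV'_nonpos : ∀ x ∈ Ioc (-b) 0, V' x ≤ 0) (hV'_nonneg : ∀ x ∈ Ico 0 b, 0 ≤ V' x)
    {f f' : ℝ → ℝ} (hf : ∀ x ∈ Ioo (-b) b, HasDerivAt f (f' x) x)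
    (hfi : IntervalIntegrable (fun x => (f x - f 0) ^ 2 * exp (-V x)) volume (-b) b)
    (hf'i : IntervalIntegrable (fun x => f' x ^ 2 * exp (-V x)) volume (-b) b) :
    ∫ x in -b..b, (f x - f 0) ^ 2 * exp (-V x)
      ≤ 4 * b ^ 2 / π ^ 2 * ∫ x in -b..b, f' x ^ 2 * exp (-V x) := by
  have hleft : uIcc (-b) 0 ⊆ uIcc (-b) b :=
    uIcc_subset_uIcc_left (mem_uIcc_of_le (by linarith) hb.le)
  have hright : uIcc 0 b ⊆ uIcc (-b) b :=
    uIcc_subset_uIcc_right (mem_uIcc_of_le (by linarith) hb.le)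
  have hreflect : ∀ {h : ℝ → ℝ}, IntervalIntegrable h volume (-b) b →
      IntervalIntegrable (fun x => h (-x)) volume 0 b ∧
        ∫ x in 0..b, h (-x) = ∫ x in -b..0, h x := fun hh => by
    refine ⟨?_, by simp only [integral_comp_neg, neg_zero]⟩
    simpa using ((IntervalIntegrable.iff_comp_neg).1 (hh.mono_set hleft)).symm
  obtain ⟨hfi_neg, hf_neg⟩ := hreflect hfi
  obtain ⟨hf'i_neg, hf'_neg⟩ := hreflect hf'i
  have hwright := weighted_wirtinger hV hV' hb hV'_nonneg
    (fun x hx => (hf x ⟨by linarith [hx.1], hx.2⟩).sub_const (f 0)) (sub_self _)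
    (hfi.mono_set hright) (hf'i.mono_set hright)
  have hwleft := weighted_wirtinger (V := fun x => V (-x)) (V' := fun x => -V' (-x))
    (fun x => ((hV (-x)).comp x (hasDerivAt_neg x)).congr_deriv (by ring))
    (hV'.comp continuous_neg).neg hb
    (fun x hx => neg_nonneg.2 (hV'_nonpos (-x) ⟨by linarith [hx.2], by linarith [hx.1]⟩))
    (g := fun x => f (-x) - f 0) (g' := fun x => -f' (-x))
    (fun x hx => (((hf (-x) ⟨by linarith [hx.2], by linarith [hx.1]⟩).comp x
      (hasDerivAt_neg x)).sub_const (f 0)).congr_deriv (by ring))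
    (by simp) hfi_neg (by simpa only [neg_sq] using hf'i_neg)
  simp only [neg_sq] at hwleft
  rw [hf_neg, hf'_neg] at hwleft
  rw [← integral_add_adjacent_intervals (hfi.mono_set hleft) (hfi.mono_set hright),
    ← integral_add_adjacent_intervals (hf'i.mono_set hleft) (hf'i.mono_set hright)]
  have hconst : 4 * b ^ 2 / π ^ 2 * (π / (2 * b)) ^ 2 = 1 := by
    field_simp
    ring
  calc _ = 4 * b ^ 2 / π ^ 2 * ((π / (2 * b)) ^ 2 * (∫ x in -b..0, (f x - f 0) ^ 2 * exp (-V x))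
          + (π / (2 * b)) ^ 2 * ∫ x in 0..b, (f x - f 0) ^ 2 * exp (-V x)) := by
        rw [← mul_add, ← mul_assoc, hconst, one_mul]
    _ ≤ _ := mul_le_mul_of_nonneg_left (add_le_add hwleft hwright) (by positivity)

end Wirtinger

theorem var_le_integral_sq_sub (μ : Measure ℝ) (f : ℝ → ℝ) (a : ℝ) :
    Var μ f ≤ ∫ x, (f x - a) ^ 2 ∂μ :=
  ciInf_le ⟨0, by rintro _ ⟨a, rfl⟩; exact integral_nonneg fun x => sq_nonneg _⟩ a

theorem PoincareOn.smul_measure {μ : Measure ℝ} {s : Set ℝ} {C : ℝ} (h : PoincareOn μ s C)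
    (c : ENNReal) : PoincareOn (c • μ) s C := by
  intro f f' hf hf2 hf'2
  simp only [Var, MeasureTheory.integral_smul_measure, smul_eq_mul]
  rcases eq_or_ne c.toReal 0 with hc | hc
  · simp [hc]
  have hc0 : c ≠ 0 := fun h => hc (by simp [h])
  have hctop : c ≠ ⊤ := fun h => hc (by simp [h])
  rw [← Real.mul_iInf_of_nonneg ENNReal.toReal_nonneg, mul_left_comm]
  exact mul_le_mul_of_nonneg_left (h f f' hf ((integrable_smul_measure hc0 hctop).1 hf2)
    ((integrable_smul_measure hc0 hctop).1 hf'2)) ENNReal.toReal_nonneg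

section Density

variable {ρ : ℝ → ℝ} (hρ : Measurable ρ) (hρ0 : 0 ≤ ρ) {a b : ℝ} (hab : a ≤ b)
include hρ hρ0 hab

theorem integral_withDensity_ofReal_restrict_Icc (h : ℝ → ℝ) :
    ∫ x, h x ∂(volume.restrict (Icc a b)).withDensity (fun x => ENNReal.ofReal (ρ x))
      = ∫ x in a..b, h x * ρ x := by
  rw [integral_withDensity_eq_integral_toReal_smul hρ.ennreal_ofReal
    (ae_of_all _ fun _ => ENNReal.ofReal_lt_top), integral_Icc_eq_integral_Ioc,
    ← intervalIntegral.integral_of_le hab]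
  simp only [ENNReal.toReal_ofReal (hρ0 _), smul_eq_mul, mul_comm]

theorem MeasureTheory.Integrable.intervalIntegrable_mul_of_withDensity_ofReal {h : ℝ → ℝ}
    (hh : Integrable h ((volume.restrict (Icc a b)).withDensity fun x => ENNReal.ofReal (ρ x))) :
    IntervalIntegrable (fun x => h x * ρ x) volume a b := by
  rw [integrable_withDensity_iff hρ.ennreal_ofReal
    (ae_of_all _ fun _ => ENNReal.ofReal_lt_top)] at hh
  simp only [ENNReal.toReal_ofReal (hρ0 _)] at hh
  exact (intervalIntegrable_iff_integrableOn_Ioc_of_le hab).2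
    (IntegrableOn.mono_set hh Ioc_subset_Icc_self)

end Density

theorem poincareOn_withDensity_exp_neg {V V' : ℝ → ℝ} (hV : ∀ x, HasDerivAt V (V' x) x)
    (hV' : Continuous V') {b : ℝ} (hb : 0 < b) (hV'_nonpos : ∀ x ∈ Ioc (-b) 0, V' x ≤ 0)
    (hV'_nonneg : ∀ x ∈ Ico 0 b, 0 ≤ V' x) :
    PoincareOn ((volume.restrict (Icc (-b) b)).withDensity fun x => ENNReal.ofReal (exp (-V x)))
      (Ioo (-b) b) (4 * b ^ 2 / π ^ 2) := by
  intro f f' hf hf2 hf'2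
  have hab : -b ≤ b := by linarith
  have hρ_cont : Continuous fun x => exp (-V x) :=
    (continuous_iff_continuousAt.2 fun x => (hV x).continuousAt).neg.rexp
  have hρ0 : 0 ≤ fun x => exp (-V x) := fun x => (exp_pos _).le
  have hfi := hf2.intervalIntegrable_mul_of_withDensity_ofReal hρ_cont.measurable hρ0 hab
  have hf'i := hf'2.intervalIntegrable_mul_of_withDensity_ofReal hρ_cont.measurable hρ0 hab
  have hf_meas : AEStronglyMeasurable f (volume.restrict (Ι (-b) b)) := by
    rw [uIoc_of_le hab, ← Measure.restrict_congr_set Ioo_ae_eq_Ioc]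
    exact (continuousOn_of_forall_continuousAt fun x hx => (hf x hx).continuousAt)
      |>.aestronglyMeasurable measurableSet_Ioo
  have hfi0 : IntervalIntegrable (fun x => (f x - f 0) ^ 2 * exp (-V x)) volume (-b) b := by
    refine ((hfi.const_mul 2).add ((hρ_cont.intervalIntegrable (-b) b).const_mul
      (2 * f 0 ^ 2))).mono_fun' (((hf_meas.sub aestronglyMeasurable_const).pow 2).mul
      hρ_cont.aestronglyMeasurable) (Eventually.of_forall fun x => ?_)
    have := exp_pos (-V x)
    dsimp only
    rw [Real.norm_of_nonneg (by positivity)]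
    nlinarith [sq_nonneg (f x + f 0)]
  calc Var _ f ≤ ∫ x, (f x - f 0) ^ 2
        ∂(volume.restrict (Icc (-b) b)).withDensity fun x => ENNReal.ofReal (exp (-V x)) :=
        var_le_integral_sq_sub _ f (f 0)
    _ ≤ 4 * b ^ 2 / π ^ 2 * ∫ x in -b..b, f' x ^ 2 * exp (-V x) := by
        rw [integral_withDensity_ofReal_restrict_Icc hρ_cont.measurable hρ0 hab]
        exact integral_sq_sub_apply_zero_le hV hV' hb hV'_nonpos hV'_nonneg hf hfi0 hf'i
    _ = _ := by rw [integral_withDensity_ofReal_restrict_Icc hρ_cont.measurable hρ0 hab]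

open ProbabilityTheory in
theorem gaussianReal_restrict_eq_smul_withDensity {s : Set ℝ} (hs : MeasurableSet s) :
    (gaussianReal 0 1).restrict s = ENNReal.ofReal (√(2 * π))⁻¹ •
      (volume.restrict s).withDensity fun x => ENNReal.ofReal (exp (-(x ^ 2 / 2))) := by
  rw [gaussianReal_of_var_ne_zero 0 one_ne_zero, restrict_withDensity hs,
    ← withDensity_smul _ (by fun_prop)]
  congr 1
  funext x
  rw [gaussianPDF, gaussianPDFReal, Pi.smul_apply, smul_eq_mul,
    ← ENNReal.ofReal_mul (by positivity)]
  congr 2 <;> simp [neg_div]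

open ProbabilityTheory in
/-- the standard Gaussian restricted to `[-b,b]` has Poincaré constant at most
`4b²/π²`, the Poincaré constant of the uniform measure on `[-b,b]`. -/
theorem stmt8 (b : ℝ) (hb : 0 < b) (ν : Measure ℝ)
    (hν : ν = ((gaussianReal 0 1) (Set.Icc (-b) b))⁻¹ •
      (gaussianReal 0 1).restrict (Set.Icc (-b) b)) :
    PoincareOn ν (Set.Ioo (-b) b) (4 * b^2 / Real.pi^2) := by
  rw [hν, gaussianReal_restrict_eq_smul_withDensity measurableSet_Icc, smul_smul]
  refine PoincareOn.smul_measure ?_ _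
  exact poincareOn_withDensity_exp_neg (V := fun x => x ^ 2 / 2) (V' := id)
    (fun x => by simpa using (hasDerivAt_pow 2 x).div_const 2) continuous_id hb
    (fun x hx => hx.2) (fun x hx => hx.1)
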